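/- Let (G, T) be a facet inducing Steiner graph with facet weights c, and let v ∈ V(G) \ T be a non-terminal vertex of degree three with incident edges e₁, e₂, e₃. Then c(e₁) ≤ c(e₂) + c(e₃), c(e₂) ≤ c(e₁) + c(e₃), and c(e₃) ≤ c(e₁) + c(e₂), and at most one of the three inequalities holds with equality. -/
import Mathlib


open Classical

/-- Two sets intersect if `A ∩ B`, `A \ B`, `B \ A` are all nonempty. -/
def Intersecting {V : Type*} (A B : Set V) : Prop :=
  (A ∩ B).Nonempty ∧ (A \ B).Nonempty ∧ (B \ A).Nonempty

/-- The edge `e` belongs to the cut `δ(S)`. -/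
def InCut {V : Type*} (S : Set V) (e : Sym2 V) : Prop :=
  ∃ u v : V, e = s(u, v) ∧ u ∈ S ∧ v ∉ S

/-- `δ(S)` is a `T`-Steiner cut iff `T ∩ S ≠ ∅` and `T \ S ≠ ∅`. -/
def IsSteinerCut {V : Type*} (T S : Set V) : Prop :=
  (T ∩ S).Nonempty ∧ (T \ S).Nonempty

/-- The incidence vector of `δ(S)` in `ℝ^{E(G)}`. -/
noncomputable def chi {V : Type*} (G : SimpleGraph V) (S : Set V) : ↥G.edgeSet → ℝ :=
  fun e => if InCut S e.val then 1 else 0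

/-- The `c`-weight of the cut `δ(S)` in `G`. -/
noncomputable def cutWeight {V : Type*} [Fintype V] [DecidableEq V] (G : SimpleGraph V)
    (c : Sym2 V → ℤ) (S : Set V) : ℤ :=
  ∑ e ∈ G.edgeFinset, if InCut S e then c e else 0

/-- `δ(S)` is a root of `c`: a minimum `c`-weight `T`-Steiner cut in `G`. -/
def IsRoot {V : Type*} [Fintype V] [DecidableEq V] (G : SimpleGraph V) (T : Set V)
    (c : Sym2 V → ℤ) (S : Set V) : Prop :=
  IsSteinerCut T S ∧ ∀ S' : Set V, IsSteinerCut T S' → cutWeight G c S ≤ cutWeight G c S'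

/-- `c` are facet weights for `(G, T)`: strictly positive on edges, in minimum integer
form, and the incidence vectors of the roots span `ℝ^{E(G)}`. -/
def FacetWeights {V : Type*} [Fintype V] [DecidableEq V] (G : SimpleGraph V) (T : Set V)
    (c : Sym2 V → ℤ) : Prop :=
  (∀ e ∈ G.edgeSet, 0 < c e) ∧
  (∀ d : ℤ, (∀ e ∈ G.edgeSet, d ∣ c e) → IsUnit d) ∧
  Submodule.span ℝ (chi G '' {S : Set V | IsRoot G T c S}) = ⊤

lemma incut_iff {V : Type*} (S : Set V) (a b : V) :
    InCut S s(a,b) ↔ (a ∈ S ∧ b ∉ S) ∨ (b ∈ S ∧ a ∉ S) := by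
  constructor
  · rintro ⟨u, w, huw, hu, hw⟩
    rw [Sym2.eq_iff] at huw
    rcases huw with ⟨rfl, rfl⟩ | ⟨rfl, rfl⟩
    · exact Or.inl ⟨hu, hw⟩
    · exact Or.inr ⟨hu, hw⟩
  · rintro (⟨h1, h2⟩ | ⟨h1, h2⟩)
    · exact ⟨a, b, rfl, h1, h2⟩
    · exact ⟨b, a, Sym2.eq_swap, h1, h2⟩

lemma incut_flip {V : Type*} (S : Set V) (v w : V) (hw : w ≠ v) :
    InCut (symmDiff S {v}) s(v,w) ↔ ¬ InCut S s(v,w) := by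
  simp only [incut_iff, Set.mem_symmDiff, Set.mem_singleton_iff]
  tauto

lemma incut_flip_of_ne {V : Type*} (S : Set V) (v a b : V) (ha : a ≠ v) (hb : b ≠ v) :
    InCut (symmDiff S {v}) s(a,b) ↔ InCut S s(a,b) := by
  simp only [incut_iff, Set.mem_symmDiff, Set.mem_singleton_iff]
  tauto

/-- The key triangle inequality at a degree-three non-terminal vertex. -/
lemma triangle_key {V : Type*} [Fintype V] [DecidableEq V]
    (G : SimpleGraph V) (T : Set V) (c : Sym2 V → ℤ) (hfw : FacetWeights G T c)
    (v : V) (hv : v ∉ T) (w₁ w₂ w₃ : V)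
    (h12 : w₁ ≠ w₂) (h13 : w₁ ≠ w₃) (h23 : w₂ ≠ w₃)
    (hnbr : G.neighborSet v = {w₁, w₂, w₃}) :
    c s(v, w₁) ≤ c s(v, w₂) + c s(v, w₃) := by
  obtain ⟨hpos, -, hspan⟩ := hfw
  have ha1 : G.Adj v w₁ := by
    have : w₁ ∈ G.neighborSet v := by rw [hnbr]; simp
    exact this
  have ha2 : G.Adj v w₂ := by
    have : w₂ ∈ G.neighborSet v := by rw [hnbr]; simp
    exact this
  have ha3 : G.Adj v w₃ := by
    have : w₃ ∈ G.neighborSet v := by rw [hnbr]; simp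
    exact this
  have hv1 : v ≠ w₁ := ha1.ne
  have hv2 : v ≠ w₂ := ha2.ne
  have hv3 : v ≠ w₃ := ha3.ne
  have hE1 : s(v, w₁) ∈ G.edgeSet := ha1
  have hE2 : s(v, w₂) ∈ G.edgeSet := ha2
  have hE3 : s(v, w₃) ∈ G.edgeSet := ha3
  have hF1 : s(v, w₁) ∈ G.edgeFinset := SimpleGraph.mem_edgeFinset.2 hE1
  have hF2 : s(v, w₂) ∈ G.edgeFinset := SimpleGraph.mem_edgeFinset.2 hE2
  have hF3 : s(v, w₃) ∈ G.edgeFinset := SimpleGraph.mem_edgeFinset.2 hE3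
  have hedge_ne : ∀ a b : V, a ≠ b → v ≠ b → s(v, a) ≠ s(v, b) := by
    intro a b hab hvb h
    rw [Sym2.eq_iff] at h
    rcases h with ⟨-, h⟩ | ⟨h, -⟩
    · exact hab h
    · exact hvb h
  have he12 : s(v, w₁) ≠ s(v, w₂) := hedge_ne _ _ h12 hv2
  have he13 : s(v, w₁) ≠ s(v, w₃) := hedge_ne _ _ h13 hv3
  have he23 : s(v, w₂) ≠ s(v, w₃) := hedge_ne _ _ h23 hv3
  -- there is a root whose cut contains s(v, w₁)
  have hroot : ∃ S : Set V, IsRoot G T c S ∧ InCut S s(v, w₁) := by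
    by_contra hcon
    push_neg at hcon
    set idx : ↥G.edgeSet := ⟨s(v, w₁), hE1⟩ with hidx
    have hle : Submodule.span ℝ (chi G '' {S : Set V | IsRoot G T c S}) ≤
        LinearMap.ker (LinearMap.proj (R := ℝ) (φ := fun _ : ↥G.edgeSet => ℝ) idx) := by
      rw [Submodule.span_le]
      rintro f ⟨S, hS, rfl⟩
      simp only [SetLike.mem_coe, LinearMap.mem_ker, LinearMap.proj_apply]
      simp only [chi, hidx]
      rw [if_neg (hcon S hS)]
    rw [hspan, top_le_iff] at hle
    have h1 : (Pi.single idx (1:ℝ)) ∈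
        LinearMap.ker (LinearMap.proj (R := ℝ) (φ := fun _ : ↥G.edgeSet => ℝ) idx) := by
      rw [hle]; trivial
    simp only [LinearMap.mem_ker, LinearMap.proj_apply, Pi.single_eq_same] at h1
    exact one_ne_zero h1
  obtain ⟨S, hS, hcut1⟩ := hroot
  set S' : Set V := symmDiff S {v} with hS'
  -- S' is a Steiner cut
  have hsteiner : IsSteinerCut T S' := by
    obtain ⟨⟨x, hxT, hxS⟩, ⟨y, hyT, hyS⟩⟩ := hS.1
    have hxv : x ≠ v := fun h => hv (h ▸ hxT)
    have hyv : y ≠ v := fun h => hv (h ▸ hyT)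
    constructor
    · exact ⟨x, hxT, by simp [hS', Set.mem_symmDiff, hxv, hxS]⟩
    · exact ⟨y, hyT, by simp [hS', Set.mem_symmDiff, hyv, hyS]⟩
  -- every edge at v is one of the three
  have hinc : ∀ a : V, G.Adj v a → a = w₁ ∨ a = w₂ ∨ a = w₃ := by
    intro a ha
    have : a ∈ G.neighborSet v := ha
    rw [hnbr] at this
    simpa using this
  -- the weight bound
  have hbound : cutWeight G c S' - cutWeight G c S ≤
      - c s(v, w₁) + c s(v, w₂) + c s(v, w₃) := by
    have hsum : cutWeight G c S' - cutWeight G c S =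
        ∑ e ∈ G.edgeFinset,
          ((if InCut S' e then c e else 0) - (if InCut S e then c e else 0)) := by
      rw [Finset.sum_sub_distrib]; rfl
    rw [hsum]
    have hle : ∀ e ∈ G.edgeFinset,
        ((if InCut S' e then c e else 0) - (if InCut S e then c e else 0)) ≤
        ((if e = s(v, w₁) then - c s(v, w₁) else 0) +
         (if e = s(v, w₂) then c s(v, w₂) else 0) +
         (if e = s(v, w₃) then c s(v, w₃) else 0)) := by
      intro e he
      by_cases h1 : e = s(v, w₁)
      · subst h1
        have hnc : ¬ InCut S' s(v, w₁) := by
          rw [hS', incut_flip S v w₁ (Ne.symm hv1)]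
          exact not_not_intro hcut1
        rw [if_neg hnc, if_pos hcut1, if_pos rfl, if_neg he12, if_neg he13]
        linarith
      · by_cases h2 : e = s(v, w₂)
        · subst h2
          have hc2 := hpos _ hE2
          rw [if_neg h1, if_pos rfl, if_neg he23]
          split_ifs <;> linarith
        · by_cases h3 : e = s(v, w₃)
          · subst h3
            have hc3 := hpos _ hE3
            rw [if_neg h1, if_neg h2, if_pos rfl]
            split_ifs <;> linarith
          · -- e not incident to v
            rw [if_neg h1, if_neg h2, if_neg h3]
            have heq : InCut S' e ↔ InCut S e := by
              induction e using Sym2.ind with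
              | _ a b =>
                have hES : s(a, b) ∈ G.edgeSet := SimpleGraph.mem_edgeFinset.1 he
                have hab : G.Adj a b := hES
                have hav : a ≠ v := by
                  intro h; subst h
                  rcases hinc b hab with rfl | rfl | rfl
                  · exact h1 rfl
                  · exact h2 rfl
                  · exact h3 rfl
                have hbv : b ≠ v := by
                  intro h; subst h
                  rcases hinc a hab.symm with rfl | rfl | rfl
                  · exact h1 (Sym2.eq_swap)
                  · exact h2 (Sym2.eq_swap)
                  · exact h3 (Sym2.eq_swap)
                exact incut_flip_of_ne S v a b hav hbv
            rw [heq]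
            simp
    calc ∑ e ∈ G.edgeFinset,
          ((if InCut S' e then c e else 0) - (if InCut S e then c e else 0))
        ≤ ∑ e ∈ G.edgeFinset,
          ((if e = s(v, w₁) then - c s(v, w₁) else 0) +
           (if e = s(v, w₂) then c s(v, w₂) else 0) +
           (if e = s(v, w₃) then c s(v, w₃) else 0)) := Finset.sum_le_sum hle
      _ = - c s(v, w₁) + c s(v, w₂) + c s(v, w₃) := by
          rw [Finset.sum_add_distrib, Finset.sum_add_distrib,
            Finset.sum_ite_eq' G.edgeFinset (s(v, w₁)),
            Finset.sum_ite_eq' G.edgeFinset (s(v, w₂)),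
            Finset.sum_ite_eq' G.edgeFinset (s(v, w₃)),
            if_pos hF1, if_pos hF2, if_pos hF3]
  have hmin := hS.2 S' hsteiner
  linarith

/-- In a facet inducing Steiner graph `(G, T)` with facet weights `c`, the weights of
the three edges at a non-terminal vertex `v` of degree three satisfy the triangle
inequalities, and at most one of them with equality. -/
theorem degree_three_nonterminal_triangle {V : Type*} [Fintype V] [DecidableEq V]
    (G : SimpleGraph V) (hconn : G.Connected) (T : Set V) (hT : 2 ≤ T.ncard)
    (c : Sym2 V → ℤ) (hfw : FacetWeights G T c)
    (v : V) (hv : v ∉ T) (v₁ v₂ v₃ : V)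
    (h12 : v₁ ≠ v₂) (h13 : v₁ ≠ v₃) (h23 : v₂ ≠ v₃)
    (hnbr : G.neighborSet v = {v₁, v₂, v₃}) :
    (c s(v, v₁) ≤ c s(v, v₂) + c s(v, v₃) ∧
     c s(v, v₂) ≤ c s(v, v₁) + c s(v, v₃) ∧
     c s(v, v₃) ≤ c s(v, v₁) + c s(v, v₂)) ∧
    ¬ (c s(v, v₁) = c s(v, v₂) + c s(v, v₃) ∧
       c s(v, v₂) = c s(v, v₁) + c s(v, v₃)) ∧
    ¬ (c s(v, v₁) = c s(v, v₂) + c s(v, v₃) ∧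
       c s(v, v₃) = c s(v, v₁) + c s(v, v₂)) ∧
    ¬ (c s(v, v₂) = c s(v, v₁) + c s(v, v₃) ∧
       c s(v, v₃) = c s(v, v₁) + c s(v, v₂)) := by
  have hnbr2 : G.neighborSet v = {v₂, v₁, v₃} := by
    rw [hnbr]; ext x; simp; tauto
  have hnbr3 : G.neighborSet v = {v₃, v₁, v₂} := by
    rw [hnbr]; ext x; simp; tauto
  have t1 := triangle_key G T c hfw v hv v₁ v₂ v₃ h12 h13 h23 hnbr
  have t2 := triangle_key G T c hfw v hv v₂ v₁ v₃ h12.symm h23 h13 hnbr2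
  have t3 := triangle_key G T c hfw v hv v₃ v₁ v₂ h13.symm h23.symm h12 hnbr3
  have ha1 : G.Adj v v₁ := by
    have : v₁ ∈ G.neighborSet v := by rw [hnbr]; simp
    exact this
  have ha2 : G.Adj v v₂ := by
    have : v₂ ∈ G.neighborSet v := by rw [hnbr]; simp
    exact this
  have ha3 : G.Adj v v₃ := by
    have : v₃ ∈ G.neighborSet v := by rw [hnbr]; simp
    exact this
  have hc1 : 0 < c s(v, v₁) := hfw.1 _ ha1
  have hc2 : 0 < c s(v, v₂) := hfw.1 _ ha2
  have hc3 : 0 < c s(v, v₃) := hfw.1 _ ha3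
  refine ⟨⟨t1, t2, t3⟩, ?_, ?_, ?_⟩ <;> rintro ⟨e1, e2⟩ <;> linarith
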